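/- arXiv:1310.5364 — 2 statements merged into one kernel-verified Lean document; each statement's English description precedes it below -/
import Mathlib

section
/- Suppose the family Υ_n is admissible relative to the sets Ω(n,m) for G ↷ (X,ν), and let G ↷ (K,κ) be a measure-preserving action on a compact metric probability space satisfying 1/3 ≤ κ(B(x,ε))/κ(B(y,ε)) ≤ 3 for all ε > 0 and x,y ∈ K. For each n ≥ 1 and g ∈ G choose 0 < ρ(n,g) < 1/n with d_K(x,y) ≤ ρ(n,g) implying d_K(g⁻¹x,g⁻¹y) ≤ 1/n, and set Υ'_n(g,b,k,b',k') = 1_{B(k,ρ(n,g))}(k') Υ_n(g,b,b') / κ(B(k,ρ(n,g))). Then for every measurable E ⊆ ℝ and all n, m: Σ_{g∈G} ∫∫ 1_E(R(g⁻¹,b',k') − R(g⁻¹,b,k)) 1_{Ω(n,m)×K}(b,k) Υ'_n(g,b,k,b',k') d(ν×κ)(b',k') d(ν×κ)(b,k) = ζ_{n,m}(E), where R(g,b,k) = log (d((ν×κ)∘g)/d(ν×κ))(b,k); that is, the measure ζ'_{n,m} associated to the product family equals ζ_{n,m}. -/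
open MeasureTheory Filter Metric Set
open scoped ENNReal

namespace StableRatio

variable {G : Type*} [Group G] [Countable G]

/-- The Radon–Nikodym derivative `d(ν∘g)/dν`, where `(ν∘g)(A) = ν(gA)`,
so that `ν∘g` is the pushforward of `ν` under the action of `g⁻¹`. -/
noncomputable def RN {Z : Type*} [MeasurableSpace Z] (act : G → Z → Z) (ν : Measure Z)
    (g : G) (z : Z) : ℝ :=
  ((ν.map (act g⁻¹)).rnDeriv ν z).toReal

/-- `R(g,η) = log (d(ν∘g)/dν)(η)`. -/
noncomputable def Rlog {Z : Type*} [MeasurableSpace Z] (act : G → Z → Z) (ν : Measure Z)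
    (g : G) (z : Z) : ℝ :=
  Real.log (RN act ν g z)

/-- A family of functions `Υ n : G → Z → Z → ℝ` is admissible relative to a family of
closed subsets `Ω n m ⊆ Z`, with constants `D C : ℕ → ℝ`, `N : ℕ → ℕ` and moduli
`fbd : ℕ → ℕ → ℝ`.  Here `dZ` is the metric on `Z` and `act` the (quasi-invariant)
action of `G` on `(Z,ν)`. -/
structure IsRelAdmissible {Z : Type*} [MeasurableSpace Z] [TopologicalSpace Z]
    (act : G → Z → Z) (dZ : Z → Z → ℝ) (ν : Measure Z) [SFinite ν]
    (Υ : ℕ → G → Z → Z → ℝ) (Ω : ℕ → ℕ → Set Z)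
    (D C : ℕ → ℝ) (N : ℕ → ℕ) (fbd : ℕ → ℕ → ℝ) : Prop where
  meas_Υ : ∀ (n : ℕ) (g : G), Measurable (Function.uncurry (Υ n g))
  nonneg_Υ : ∀ (n : ℕ) (g : G) (b b' : Z), 0 ≤ Υ n g b b'
  closed_Ω : ∀ n m : ℕ, IsClosed (Ω n m)
  D_pos : ∀ m : ℕ, 0 < D m
  D_lim : Tendsto D atTop (nhds 0)
  Ω_big : ∀ n m : ℕ, ENNReal.ofReal (1 - D m) < ν (Ω n m)
  f_lim : ∀ m : ℕ, Tendsto (fbd m) atTop (nhds 0)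
  close : ∀ (n m : ℕ) (g : G) (b b' : Z), b ∈ Ω n m → 0 < Υ n g b b' →
    dZ b b' < fbd m n ∧ dZ (act g⁻¹ b) (act g⁻¹ b') < fbd m n
  C_pos : ∀ m : ℕ, 0 < C m
  N_pos : ∀ m : ℕ, 0 < N m
  R_bound : ∀ (m n : ℕ), N m < n → ∀ g : G, ∀ᵐ p ∂(ν.prod ν),
    p.1 ∈ Ω n m → 0 < Υ n g p.1 p.2 →
      (|Rlog act ν g⁻¹ p.1| + |Rlog act ν g⁻¹ p.2| < C m ∧
        1 / C m ≤ |Rlog act ν g⁻¹ p.1 - Rlog act ν g⁻¹ p.2|)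
  normalized : ∀ (n : ℕ) (b : Z),
    (∑' g : G, ∫⁻ b', ENNReal.ofReal (Υ n g b b') ∂ν) = 1
  bdd₁ : ∀ (m n : ℕ), N m < n → ∀ᵐ b' ∂ν,
    (∫⁻ b in Ω n m, ∑' g : G, ENNReal.ofReal (Υ n g b b') ∂ν) ≤ ENNReal.ofReal (C m)
  bdd₂ : ∀ (m n : ℕ), N m < n → ∀ᵐ b' ∂ν,
    (∫⁻ b in Ω n m, ∑' g : G, ENNReal.ofReal (Υ n g b (act g b') * RN act ν g b') ∂ν)
      ≤ ENNReal.ofReal (C m)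
  bdd₃ : ∀ (m n : ℕ), N m < n → ∀ᵐ b ∂ν,
    (∫⁻ b', ∑' g : G, Set.indicator (Ω n m) (fun _ => (1 : ℝ≥0∞)) (act g b)
        * ENNReal.ofReal (Υ n g (act g b) b' * RN act ν g b') ∂ν) ≤ ENNReal.ofReal (C m)

/-- The measure `θ` on `ℝ` with `dθ = (1/2) e^{-|t|} dt`. -/
noncomputable def theta : Measure ℝ :=
  MeasureTheory.volume.withDensity (fun t : ℝ => ENNReal.ofReal ((1 / 2) * Real.exp (-|t|)))

instance : SFinite theta := by unfold theta; infer_instance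

/-- The measure `ζ_{n,m}` on `ℝ`:
`ζ_{n,m}(E) = Σ_{g∈G} ∫∫ 1_E(R(g⁻¹,b') − R(g⁻¹,b)) 1_{Ω(n,m)}(b) Υ_n(g,b,b') dν(b) dν(b')`. -/
noncomputable def zeta {Z : Type*} [MeasurableSpace Z] (act : G → Z → Z) (ν : Measure Z)
    [SFinite ν] (Υ : ℕ → G → Z → Z → ℝ) (Ω : ℕ → ℕ → Set Z) (n m : ℕ) : Measure ℝ :=
  Measure.sum fun g : G =>
    ((ν.prod ν).withDensity fun p =>
        Set.indicator (Ω n m) (fun _ => (1 : ℝ≥0∞)) p.1 * ENNReal.ofReal (Υ n g p.1 p.2)).map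
      fun p => Rlog act ν g⁻¹ p.2 - Rlog act ν g⁻¹ p.1

/-- The measure `ζ_{n,b}` on `ℝ`:
`ζ_{n,b}(E) = Σ_{g∈G} ∫ 1_E(R(g⁻¹,b') − R(g⁻¹,b)) Υ_n(g,b,b') dν(b')`. -/
noncomputable def zetaB {Z : Type*} [MeasurableSpace Z] (act : G → Z → Z) (ν : Measure Z)
    (Υ : ℕ → G → Z → Z → ℝ) (n : ℕ) (b : Z) : Measure ℝ :=
  Measure.sum fun g : G =>
    (ν.withDensity fun b' => ENNReal.ofReal (Υ n g b b')).map
      fun b' => Rlog act ν g⁻¹ b' - Rlog act ν g⁻¹ b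

/-- `μ` is a weak-* limit point of the sequence `μs`, i.e. the limit of some subsequence
in the weak-* topology (integration against bounded continuous functions). -/
def WeakStarLimitPoint (μs : ℕ → Measure ℝ) (μ : Measure ℝ) : Prop :=
  ∃ φ : ℕ → ℕ, StrictMono φ ∧
    ∀ f : BoundedContinuousFunction ℝ ℝ,
      Tendsto (fun k => ∫ x, f x ∂(μs (φ k))) atTop (nhds (∫ x, f x ∂μ))

/-- `T` belongs to the (topological) support of the measure `μ` on `ℝ`. -/
def MemSupport (μ : Measure ℝ) (T : ℝ) : Prop :=
  ∀ ε : ℝ, 0 < ε → 0 < μ (Metric.ball T ε)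

/-- `r` belongs to the ratio set of the action `act` of `G` on `(Z,μ)`. -/
def InRatioSet {Z : Type*} [MeasurableSpace Z] (act : G → Z → Z) (μ : Measure Z)
    (r : ℝ) : Prop :=
  ∀ A : Set Z, MeasurableSet A → 0 < μ A → ∀ ε : ℝ, 0 < ε →
    ∃ A' : Set Z, MeasurableSet A' ∧ A' ⊆ A ∧ 0 < μ A' ∧
      ∃ g : G, g ≠ 1 ∧ act g '' A' ⊆ A ∧ ∀ b ∈ A', |RN act μ g b - r| ≤ ε

/-- `r` belongs to the stable ratio set of the action `act` of `G` on `(Z,ν)`: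
`r` is in the ratio set of the product of the action with every probability
measure preserving action of `G`. -/
def InStableRatioSet {Z : Type*} [MeasurableSpace Z] (act : G → Z → Z) (ν : Measure Z)
    [SFinite ν] (r : ℝ) : Prop :=
  ∀ (Y : Type) [MeasurableSpace Y] (κ : Measure Y) [IsProbabilityMeasure κ]
    (aY : G → Y → Y),
    (∀ g : G, Measurable (aY g)) → aY 1 = id →
    (∀ g h : G, aY (g * h) = aY g ∘ aY h) →
    (∀ g : G, κ.map (aY g) = κ) →
    InRatioSet (fun g (p : Z × Y) => (act g p.1, aY g p.2)) (ν.prod κ) r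

/-- The operator `W_{n,m}`. -/
noncomputable def Wop {Z : Type*} [MeasurableSpace Z] (ν : Measure Z)
    (Υ : ℕ → G → Z → Z → ℝ) (Ω : ℕ → ℕ → Set Z) (n m : ℕ)
    (f : Z → ℝ → ℝ) (b : Z) (t : ℝ) : ℝ :=
  ∑' g : G, ∫ b', Set.indicator (Ω n m) (fun _ => (1 : ℝ)) b * Υ n g b b' * f b' t ∂ν

/-- The operator `X_{n,m}`. -/
noncomputable def Xop {Z : Type*} [MeasurableSpace Z] (act : G → Z → Z) (ν : Measure Z)
    (Υ : ℕ → G → Z → Z → ℝ) (Ω : ℕ → ℕ → Set Z) (n m : ℕ)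
    (f : Z → ℝ → ℝ) (b : Z) (t : ℝ) : ℝ :=
  ∑' g : G, ∫ b', Set.indicator (Ω n m) (fun _ => (1 : ℝ)) b * Υ n g b b' *
      f (act g⁻¹ b') (t + Rlog act ν g⁻¹ b') ∂ν

/-- The operator `Y_{n,m}`. -/
noncomputable def Yop {Z : Type*} [MeasurableSpace Z] (act : G → Z → Z) (ν : Measure Z)
    (Υ : ℕ → G → Z → Z → ℝ) (Ω : ℕ → ℕ → Set Z) (n m : ℕ)
    (f : Z → ℝ → ℝ) (b : Z) (t : ℝ) : ℝ :=
  ∑' g : G, ∫ b', Set.indicator (Ω n m) (fun _ => (1 : ℝ)) b * Υ n g b b' *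
      f (act g⁻¹ b) (t + Rlog act ν g⁻¹ b') ∂ν

/-- The operator `L_{n,m}`. -/
noncomputable def Lop {Z : Type*} [MeasurableSpace Z] (act : G → Z → Z) (ν : Measure Z)
    (Υ : ℕ → G → Z → Z → ℝ) (Ω : ℕ → ℕ → Set Z) (n m : ℕ)
    (f : Z → ℝ → ℝ) (b : Z) (t : ℝ) : ℝ :=
  ∑' g : G, ∫ b', Set.indicator (Ω n m) (fun _ => (1 : ℝ)) b * Υ n g b b' *
      f b (t + Rlog act ν g⁻¹ b' - Rlog act ν g⁻¹ b) ∂ν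

/-!
Because `κ` is `aK`-invariant, the Radon–Nikodym derivative of the product action on `ν × κ` is
a.e. that of the `X`-coordinate alone, so the integrand `1_E(R(g⁻¹,b',k') − R(g⁻¹,b,k))` only sees
`b` and `b'`. The doubling-type bound on `κ` and compactness of `K` make every ball have positive
measure, so `k' ↦ 1_{B(k,ρ)}(k') / κ(B(k,ρ))` is a probability density; integrating out `k'`
against it and then `k` against `κ` leaves exactly `ζ_{n,m}`.
-/

theorem rnDeriv_map_prodMap_ae {α β : Type*} [MeasurableSpace α] [MeasurableSpace β]
    {ν : Measure α} [SigmaFinite ν] {κ : Measure β} [SigmaFinite κ] {f : α → α} {g : β → β}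
    (hf : Measurable f) (hg : Measurable g) (hfν : ν.map f ≪ ν) (hgκ : κ.map g = κ) :
    ((ν.prod κ).map (Prod.map f g)).rnDeriv (ν.prod κ)
      =ᵐ[ν.prod κ] fun p => (ν.map f).rnDeriv ν p.1 := by
  have hprod : (ν.map f).prod κ = (ν.prod κ).withDensity fun p => (ν.map f).rnDeriv ν p.1 := by
    conv_lhs => rw [← Measure.withDensity_rnDeriv_eq _ _ hfν]
    exact prod_withDensity_left (Measure.measurable_rnDeriv _ _)
  rw [← Measure.map_prod_map _ _ hf hg, hgκ, hprod]
  exact Measure.rnDeriv_withDensity _ ((Measure.measurable_rnDeriv _ _).comp measurable_fst)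

theorem ae_eq_prod_sub {α : Type*} [MeasurableSpace α] {μ : Measure α} [SFinite μ]
    {f f' : α → ℝ} (h : f =ᵐ[μ] f') :
    (fun q : α × α => f q.2 - f q.1) =ᵐ[μ.prod μ] fun q => f' q.2 - f' q.1 :=
  (Measure.quasiMeasurePreserving_snd.ae_eq h).sub (Measure.quasiMeasurePreserving_fst.ae_eq h)

theorem map_withDensity_mul_of_lintegral_eq_one {α β : Type*} [MeasurableSpace α]
    [MeasurableSpace β] (ν : Measure α) [SFinite ν] (κ : Measure β) [IsProbabilityMeasure κ]
    {w : α × α → ℝ≥0∞} (hw : Measurable w) {h : β → β → ℝ≥0∞}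
    (hh : Measurable (Function.uncurry h)) (hh1 : ∀ k, ∫⁻ k', h k k' ∂κ = 1) :
    (((ν.prod κ).prod (ν.prod κ)).withDensity fun q => w (q.1.1, q.2.1) * h q.1.2 q.2.2).map
        (fun q => (q.1.1, q.2.1)) = (ν.prod ν).withDensity w := by
  have hproj : Measurable fun q : (α × β) × (α × β) => (q.1.1, q.2.1) := by fun_prop
  ext s hs
  have hws : Measurable (s.indicator w) := hw.indicator hs
  have hinner : ∀ b k, ∫⁻ p', s.indicator w (b, p'.1) * h k p'.2 ∂(ν.prod κ)
      = ∫⁻ b', s.indicator w (b, b') ∂ν := by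
    intro b k
    have hk : Measurable (h k) := hh.comp measurable_prodMk_left
    rw [lintegral_prod _ (by fun_prop)]
    refine lintegral_congr fun b' => ?_
    dsimp only
    rw [lintegral_const_mul _ hk, hh1, mul_one]
  calc _ = ∫⁻ q : (α × β) × (α × β), s.indicator w (q.1.1, q.2.1) * h q.1.2 q.2.2
        ∂((ν.prod κ).prod (ν.prod κ)) := by
          rw [Measure.map_apply hproj hs, withDensity_apply _ (hproj hs),
            ← lintegral_indicator (hproj hs)]
          refine lintegral_congr fun q => ?_
          by_cases hq : (q.1.1, q.2.1) ∈ s <;> simp [hq]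
    _ = ∫⁻ p : α × β, ∫⁻ b', s.indicator w (p.1, b') ∂ν ∂(ν.prod κ) := by
          rw [lintegral_prod _ (by fun_prop)]
          simp only [hinner]
    _ = ∫⁻ p, s.indicator w p ∂(ν.prod ν) := by
          rw [lintegral_prod _ (by fun_prop), lintegral_prod _ (by fun_prop)]
          simp
    _ = _ := by rw [withDensity_apply _ hs, lintegral_indicator hs]

theorem ofReal_indicator_mul_div_toReal {K : Type*} (s : Set K) (k : K) (y : ℝ)
    {c : ℝ≥0∞} (hc0 : c ≠ 0) (hcT : c ≠ ⊤) :
    ENNReal.ofReal (s.indicator (fun _ => (1 : ℝ)) k * y / c.toReal)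
      = ENNReal.ofReal y * (s.indicator (fun _ => 1) k * c⁻¹) := by
  by_cases hk : k ∈ s
  · rw [indicator_of_mem hk, indicator_of_mem hk, one_mul, one_mul,
      ENNReal.ofReal_div_of_pos (ENNReal.toReal_pos hc0 hcT), ENNReal.ofReal_toReal hcT,
      div_eq_mul_inv]
  · simp [hk]

theorem measure_closedBall_ne_zero_of_le_mul {K : Type*} [PseudoMetricSpace K] [CompactSpace K]
    [MeasurableSpace K] {κ : Measure K} [NeZero κ] {c : ℝ≥0∞} {r : ℝ} (hr : 0 < r)
    (hκ : ∀ x y : K, κ (closedBall x r) ≤ c * κ (closedBall y r)) (x : K) :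
    κ (closedBall x r) ≠ 0 := by
  intro h0
  have hball : ∀ y, κ (ball y r) = 0 := fun y =>
    measure_mono_null ball_subset_closedBall <| le_antisymm (by simpa [h0] using hκ y x) zero_le
  obtain ⟨s, hs⟩ := isCompact_univ.elim_finite_subcover (fun y : K => ball y r)
    (fun _ => isOpen_ball) (fun z _ => mem_iUnion.2 ⟨z, mem_ball_self hr⟩)
  have huniv : κ univ = 0 :=
    measure_mono_null hs <| (measure_biUnion_null_iff s.countable_toSet).2 fun y _ => hball y
  exact NeZero.ne κ (Measure.measure_univ_eq_zero.1 huniv)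

section closedBall

variable {K : Type*} [PseudoMetricSpace K] [MeasurableSpace K] (κ : Measure K) (r : ℝ)

theorem measurable_measure_closedBall [SecondCountableTopology K] [OpensMeasurableSpace K]
    [SFinite κ] : Measurable fun k => κ (closedBall k r) :=
  measurable_measure_prodMk_left (s := {p : K × K | dist p.2 p.1 ≤ r})
    (measurableSet_le (measurable_snd.dist measurable_fst) measurable_const)

theorem measurable_closedBall_indicator_mul_inv [SecondCountableTopology K]
    [OpensMeasurableSpace K] [SFinite κ] :
    Measurable (Function.uncurry fun k k' : K =>
      (closedBall k r).indicator (fun _ => (1 : ℝ≥0∞)) k' * (κ (closedBall k r))⁻¹) := by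
  have hS : MeasurableSet {p : K × K | dist p.2 p.1 ≤ r} :=
    measurableSet_le (measurable_snd.dist measurable_fst) measurable_const
  exact (measurable_const.indicator hS).mul
    ((measurable_measure_closedBall κ r).comp measurable_fst).inv

theorem lintegral_closedBall_indicator_mul_inv [OpensMeasurableSpace K] [IsFiniteMeasure κ]
    {k : K} (hk : κ (closedBall k r) ≠ 0) :
    ∫⁻ k', (closedBall k r).indicator (fun _ => (1 : ℝ≥0∞)) k' * (κ (closedBall k r))⁻¹ ∂κ
      = 1 := by
  rw [lintegral_mul_const _ (measurable_const.indicator measurableSet_closedBall),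
    lintegral_indicator_const measurableSet_closedBall, one_mul,
    ENNReal.mul_inv_cancel hk (measure_ne_top κ _)]

end closedBall

theorem Rlog_prod_ae_eq_comp_fst {G α β : Type*} [Group G] [MeasurableSpace α]
    [MeasurableSpace β] {act : G → α → α} {aK : G → β → β} {ν : Measure α} [SigmaFinite ν]
    {κ : Measure β} [SigmaFinite κ] {g : G} (hf : Measurable (act g⁻¹))
    (hg : Measurable (aK g⁻¹)) (hfν : ν.map (act g⁻¹) ≪ ν) (hgκ : κ.map (aK g⁻¹) = κ) :
    Rlog (fun g p => (act g p.1, aK g p.2)) (ν.prod κ) g =ᵐ[ν.prod κ]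
      fun p => Rlog act ν g p.1 := by
  filter_upwards [rnDeriv_map_prodMap_ae hf hg hfν hgκ] with p hp
  simp only [Rlog, RN, ← hp]
  rfl

theorem map_withDensity_prodAction_eq {G X K : Type*} [Group G] [MeasurableSpace X]
    [PseudoMetricSpace K] [SecondCountableTopology K] [MeasurableSpace K] [OpensMeasurableSpace K]
    {act : G → X → X} {aK : G → K → K} {ν : Measure X} [IsProbabilityMeasure ν]
    {κ : Measure K} [IsProbabilityMeasure κ] {g : G} (hf : Measurable (act g⁻¹))
    (hg : Measurable (aK g⁻¹)) (hfν : ν.map (act g⁻¹) ≪ ν) (hgκ : κ.map (aK g⁻¹) = κ)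
    {w : X × X → ℝ≥0∞} (hw : Measurable w) {r : ℝ} (hB : ∀ k, κ (closedBall k r) ≠ 0) :
    (((ν.prod κ).prod (ν.prod κ)).withDensity fun q => w (q.1.1, q.2.1) *
        ((closedBall q.1.2 r).indicator (fun _ => 1) q.2.2 * (κ (closedBall q.1.2 r))⁻¹)).map
      (fun q => Rlog (fun g (p : X × K) => (act g p.1, aK g p.2)) (ν.prod κ) g q.2 -
        Rlog (fun g (p : X × K) => (act g p.1, aK g p.2)) (ν.prod κ) g q.1)
      = ((ν.prod ν).withDensity w).map fun p => Rlog act ν g p.2 - Rlog act ν g p.1 := by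
  have hRlog : Measurable (Rlog act ν g) :=
    Real.measurable_log.comp (Measure.measurable_rnDeriv _ _).ennreal_toReal
  rw [Measure.map_congr ((withDensity_absolutelyContinuous _ _).ae_le
      (ae_eq_prod_sub (Rlog_prod_ae_eq_comp_fst hf hg hfν hgκ))),
    ← map_withDensity_mul_of_lintegral_eq_one ν κ hw
      (measurable_closedBall_indicator_mul_inv κ r)
      (fun k => lintegral_closedBall_indicator_mul_inv κ r (hB k)),
    Measure.map_map (by fun_prop) (by fun_prop)]
  rfl

theorem stmt18_general {G X : Type*} [Group G]
    [MetricSpace X] [MeasurableSpace X] [BorelSpace X]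
    (act : G → X → X)
    (hact_meas : ∀ g : G, Measurable (act g))
    (ν : Measure X) [IsProbabilityMeasure ν]
    (hqi : ∀ g : G, ν.map (act g) ≪ ν ∧ ν ≪ ν.map (act g))
    (Υ : ℕ → G → X → X → ℝ) (Ω : ℕ → ℕ → Set X)
    (D C : ℕ → ℝ) (N : ℕ → ℕ) (fbd : ℕ → ℕ → ℝ)
    (hadm : IsRelAdmissible act (fun a b : X => dist a b) ν Υ Ω D C N fbd)
    {K : Type*} [MetricSpace K] [CompactSpace K] [MeasurableSpace K] [BorelSpace K]
    (κ : Measure K) [IsProbabilityMeasure κ]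
    (aK : G → K → K)
    (haK_meas : ∀ g : G, Measurable (aK g))
    (haK_pres : ∀ g : G, κ.map (aK g) = κ)
    (hball : ∀ ε : ℝ, 0 < ε → ∀ x y : K,
      κ (Metric.closedBall x ε) ≤ 3 * κ (Metric.closedBall y ε))
    (ρ : ℕ → G → ℝ)
    (hρ : ∀ (n : ℕ) (g : G), 0 < ρ n g ∧ ρ n g < 1 / (n + 1) ∧
      ∀ x y : K, dist x y ≤ ρ n g → dist (aK g⁻¹ x) (aK g⁻¹ y) ≤ 1 / (n + 1)) :
    ∀ (n m : ℕ) (E : Set ℝ), MeasurableSet E →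
      zeta (fun g (p : X × K) => (act g p.1, aK g p.2)) (ν.prod κ)
          (fun (n : ℕ) (g : G) (p q : X × K) =>
      (Set.indicator (Metric.closedBall p.2 (ρ n g)) (fun _ => (1 : ℝ)) q.2 * Υ n g p.1 q.1)
        / (κ (Metric.closedBall p.2 (ρ n g))).toReal)
          (fun n m => Ω n m ×ˢ (Set.univ : Set K)) n m E
        = zeta act ν Υ Ω n m E := by
  intro n m E _
  simp only [zeta]
  congr 2
  ext1 g
  have hr := (hρ n g).1
  have hB := measure_closedBall_ne_zero_of_le_mul hr (hball _ hr)
  have hw : Measurable fun p : X × X =>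
      (Ω n m).indicator (fun _ => (1 : ℝ≥0∞)) p.1 * ENNReal.ofReal (Υ n g p.1 p.2) :=
    ((measurable_const.indicator (hadm.closed_Ω n m).measurableSet).comp measurable_fst).mul
      (hadm.meas_Υ n g).ennreal_ofReal
  convert map_withDensity_prodAction_eq (g := g⁻¹) (hact_meas _) (haK_meas _) (hqi _).1
    (haK_pres _) hw hB using 3
  funext q
  rw [ofReal_indicator_mul_div_toReal _ _ _ (hB q.1.2) (measure_ne_top κ _), ← mul_assoc,
    prod_univ]
  rfl

theorem stmt18 {G X : Type*} [Group G] [Countable G]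
    [MetricSpace X] [CompactSpace X] [MeasurableSpace X] [BorelSpace X]
    (act : G → X → X) (hact_one : act 1 = id)
    (hact_mul : ∀ g h : G, act (g * h) = act g ∘ act h)
    (hact_meas : ∀ g : G, Measurable (act g))
    (ν : Measure X) [IsProbabilityMeasure ν]
    (hqi : ∀ g : G, ν.map (act g) ≪ ν ∧ ν ≪ ν.map (act g))
    (Υ : ℕ → G → X → X → ℝ) (Ω : ℕ → ℕ → Set X)
    (D C : ℕ → ℝ) (N : ℕ → ℕ) (fbd : ℕ → ℕ → ℝ)
    (hadm : IsRelAdmissible act (fun a b : X => dist a b) ν Υ Ω D C N fbd)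
    {K : Type*} [MetricSpace K] [CompactSpace K] [MeasurableSpace K] [BorelSpace K]
    (κ : Measure K) [IsProbabilityMeasure κ]
    (aK : G → K → K) (haK_one : aK 1 = id)
    (haK_mul : ∀ g h : G, aK (g * h) = aK g ∘ aK h)
    (haK_cont : ∀ g : G, Continuous (aK g))
    (haK_meas : ∀ g : G, Measurable (aK g))
    (haK_pres : ∀ g : G, κ.map (aK g) = κ)
    (hball : ∀ ε : ℝ, 0 < ε → ∀ x y : K,
      κ (Metric.closedBall x ε) ≤ 3 * κ (Metric.closedBall y ε))
    (ρ : ℕ → G → ℝ)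
    (hρ : ∀ (n : ℕ) (g : G), 0 < ρ n g ∧ ρ n g < 1 / (n + 1) ∧
      ∀ x y : K, dist x y ≤ ρ n g → dist (aK g⁻¹ x) (aK g⁻¹ y) ≤ 1 / (n + 1)) :
    ∀ (n m : ℕ) (E : Set ℝ), MeasurableSet E →
      zeta (fun g (p : X × K) => (act g p.1, aK g p.2)) (ν.prod κ)
          (fun (n : ℕ) (g : G) (p q : X × K) =>
      (Set.indicator (Metric.closedBall p.2 (ρ n g)) (fun _ => (1 : ℝ)) q.2 * Υ n g p.1 q.1)
        / (κ (Metric.closedBall p.2 (ρ n g))).toReal)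
          (fun n m => Ω n m ×ˢ (Set.univ : Set K)) n m E
        = zeta act ν Υ Ω n m E :=
  stmt18_general act hact_meas ν hqi Υ Ω D C N fbd hadm κ aK haK_meas haK_pres hball ρ hρ
end StableRatio
end

section
/- Suppose the family Υ_n is admissible relative to the sets Ω(n,m) for G ↷ (X,ν). Let f : X × ℝ → ℝ be a bounded continuous function and define Var_{n,m}(f) = sup{|f(x,t) − f(y,t)| : x,y ∈ X, t ∈ ℝ, d(x,y) < f_m(n)}. Then: (a) (W_{n,m}f)(b,t) = 0 whenever b ∉ Ω(n,m); and (b) for every b ∈ Ω(n,m) and every t ∈ ℝ, |(W_{n,m}f)(b,t) − f(b,t)| ≤ Var_{n,m}(f). Consequently ‖W_{n,m}f − f‖_{L¹(ν×θ)} ≤ Var_{n,m}(f) + D(m)‖f‖_∞. -/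
open MeasureTheory Filter Metric Set
open scoped ENNReal

namespace StableRatio

variable {G : Type*} [Group G] [Countable G]

/-!
On `Ω(n,m)` the normalisation of `Υ_n` makes `W_{n,m}f(b,t)` an average of the values
`f(b',t)` against the probability weights `Υ_n(g,b,b') dν(b')`, and these weights vanish unless
`d(b,b') < f_m(n)`; hence the pointwise bound. Off `Ω(n,m)` the operator vanishes, so
`|W_{n,m}f - f| ≤ ‖f‖_∞` there, on a set of `ν × θ`-measure less than `D(m)` (`θ` is a
probability measure since `∫ e^{-|t|} dt = 2`).
-/

open scoped BoundedContinuousFunction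

lemma integral_exp_neg_abs : ∫ x : ℝ, Real.exp (-|x|) = 2 := by
  rw [integral_comp_abs (f := fun x => Real.exp (-x)), integral_exp_neg_Ioi_zero, mul_one]

lemma isProbabilityMeasure_theta : IsProbabilityMeasure theta := by
  have hint : Integrable fun t : ℝ => 1 / 2 * Real.exp (-|t|) :=
    .of_integral_ne_zero (by rw [integral_const_mul, integral_exp_neg_abs]; norm_num)
  constructor
  rw [theta, withDensity_apply _ MeasurableSet.univ, setLIntegral_univ,
    ← ofReal_integral_eq_lintegral_ofReal hint (ae_of_all _ fun t => by positivity),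
    integral_const_mul, integral_exp_neg_abs]
  norm_num

section Averaging

variable {ι Z : Type*} [MeasurableSpace Z] {ν : Measure Z} {w : ι → Z → ℝ}

lemma integrable_of_tsum_lintegral_eq_one (hw : ∀ i, AEStronglyMeasurable (w i) ν)
    (hw0 : ∀ i, 0 ≤ᵐ[ν] w i) (hsum : ∑' i, ∫⁻ z, ENNReal.ofReal (w i z) ∂ν = 1) (i : ι) :
    Integrable (w i) ν :=
  ⟨hw i, (hasFiniteIntegral_iff_ofReal (hw0 i)).2 <|
    (ENNReal.le_tsum i).trans_lt (hsum ▸ ENNReal.one_lt_top)⟩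

lemma hasSum_integral_of_tsum_lintegral_eq_one (hw : ∀ i, AEStronglyMeasurable (w i) ν)
    (hw0 : ∀ i, 0 ≤ᵐ[ν] w i) (hsum : ∑' i, ∫⁻ z, ENNReal.ofReal (w i z) ∂ν = 1) :
    HasSum (fun i => ∫ z, w i z ∂ν) 1 := by
  have h := ENNReal.hasSum_toReal (hsum ▸ ENNReal.one_ne_top)
  rw [← ENNReal.tsum_toReal_eq fun i => ne_top_of_le_ne_top ENNReal.one_ne_top
    (hsum ▸ ENNReal.le_tsum i), hsum, ENNReal.toReal_one] at h
  simpa only [integral_eq_lintegral_of_nonneg_ae (hw0 _) (hw _)] using h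

lemma abs_tsum_integral_mul_sub_le {φ : Z → ℝ} {c V : ℝ} (hw : ∀ i, Integrable (w i) ν)
    (hw0 : ∀ i z, 0 ≤ w i z) (hsum : HasSum (fun i => ∫ z, w i z ∂ν) 1)
    (hφ : AEStronglyMeasurable φ ν) (hclose : ∀ i z, 0 < w i z → |φ z - c| ≤ V) :
    |∑' i, ∫ z, w i z * φ z ∂ν - c| ≤ V := by
  have hdev_le : ∀ i z, ‖w i z * (φ z - c)‖ ≤ V * w i z := by
    intro i z
    rcases (hw0 i z).eq_or_lt with h | h
    · simp [← h]
    · rw [norm_mul, Real.norm_of_nonneg (hw0 i z), Real.norm_eq_abs, mul_comm]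
      exact mul_le_mul_of_nonneg_right (hclose i z h) (hw0 i z)
  have hdev_int : ∀ i, Integrable (fun z => w i z * (φ z - c)) ν := fun i =>
    ((hw i).const_mul V).mono' ((hw i).aestronglyMeasurable.mul
      (hφ.sub aestronglyMeasurable_const)) (ae_of_all _ (hdev_le i))
  have hdev_norm : ∀ i, ‖∫ z, w i z * (φ z - c) ∂ν‖ ≤ V * ∫ z, w i z ∂ν := fun i =>
    (norm_integral_le_of_norm_le ((hw i).const_mul V) (ae_of_all _ (hdev_le i))).trans_eq
      (integral_const_mul _ _)
  have hVsum : HasSum (fun i => V * ∫ z, w i z ∂ν) V := by simpa using hsum.mul_left V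
  have hsplit : ∀ i, ∫ z, w i z * φ z ∂ν = ∫ z, w i z * (φ z - c) ∂ν + c * ∫ z, w i z ∂ν := by
    intro i
    rw [← integral_const_mul, ← integral_add (hdev_int i) ((hw i).const_mul c)]
    exact integral_congr_ae (ae_of_all _ fun z => by ring)
  have hWsum : HasSum (fun i => ∫ z, w i z * φ z ∂ν) (∑' i, ∫ z, w i z * (φ z - c) ∂ν + c) := by
    simp_rw [hsplit]
    simpa using ((Summable.of_norm_bounded hVsum.summable hdev_norm).hasSum).add
      (hsum.mul_left c)
  rw [hWsum.tsum_eq, add_sub_cancel_right, ← Real.norm_eq_abs]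
  exact tsum_of_norm_bounded hVsum hdev_norm

end Averaging

lemma integral_le_add_measureReal_compl_mul {α : Type*} [MeasurableSpace α] {μ : Measure α}
    [IsProbabilityMeasure μ] {h : α → ℝ} {s : Set α} {V K : ℝ} (hs : MeasurableSet s)
    (h0 : 0 ≤ h) (hV0 : 0 ≤ V) (hV : ∀ x ∈ s, h x ≤ V) (hK : ∀ x ∉ s, h x ≤ K) :
    ∫ x, h x ∂μ ≤ V + μ.real sᶜ * K := by
  have hbound : Integrable (fun x => V + sᶜ.indicator (fun _ => K) x) μ :=
    (integrable_const V).add ((integrable_const K).indicator hs.compl)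
  calc ∫ x, h x ∂μ ≤ ∫ x, (V + sᶜ.indicator (fun _ => K) x) ∂μ := by
        refine integral_mono_of_nonneg (ae_of_all _ h0) hbound (ae_of_all _ fun x => ?_)
        by_cases hx : x ∈ s
        · simpa [hx] using hV x hx
        · simpa [hx] using (hK x hx).trans (le_add_of_nonneg_left hV0)
    _ = V + μ.real sᶜ * K := by
        rw [integral_add (integrable_const V) ((integrable_const K).indicator hs.compl),
          integral_const, integral_indicator_const _ hs.compl]
        simp

section Variation

variable {X T : Type*} [PseudoMetricSpace X]

/-- The paper's `Var_{n,m}(f)` is `horizontalVariation f (f_m(n))`. -/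
noncomputable def horizontalVariation (f : X × T → ℝ) (r : ℝ) : ℝ :=
  sSup {v : ℝ | ∃ (x y : X) (s : T), dist x y < r ∧ v = |f (x, s) - f (y, s)|}

lemma horizontalVariation_nonneg (f : X × T → ℝ) (r : ℝ) : 0 ≤ horizontalVariation f r :=
  Real.sSup_nonneg (by rintro v ⟨x, y, s, -, rfl⟩; exact abs_nonneg _)

variable [TopologicalSpace T]

lemma abs_sub_le_horizontalVariation (f : X × T →ᵇ ℝ) {r : ℝ} {x y : X} (s : T)
    (hxy : dist x y < r) : |f (x, s) - f (y, s)| ≤ horizontalVariation f r :=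
  le_csSup ⟨2 * ‖f‖, by rintro v ⟨x, y, s, -, rfl⟩; exact f.dist_le_two_norm _ _⟩
    ⟨x, y, s, hxy, rfl⟩

end Variation

section Wop

omit [Group G] [Countable G]

variable {Z : Type*} [MeasurableSpace Z] {ν : Measure Z} {Υ : ℕ → G → Z → Z → ℝ}
  {Ω : ℕ → ℕ → Set Z} {n m : ℕ} {f : Z → ℝ → ℝ} {b : Z}

lemma Wop_of_notMem (hb : b ∉ Ω n m) (t : ℝ) : Wop ν Υ Ω n m f b t = 0 := by
  simp [Wop, indicator_of_notMem hb]

lemma Wop_of_mem (hb : b ∈ Ω n m) (t : ℝ) :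
    Wop ν Υ Ω n m f b t = ∑' g : G, ∫ b', Υ n g b b' * f b' t ∂ν := by
  simp [Wop, indicator_of_mem hb]

end Wop

namespace IsRelAdmissible

omit [Countable G]

variable {Z : Type*} [MeasurableSpace Z] [TopologicalSpace Z] {act : G → Z → Z}
  {dZ : Z → Z → ℝ} {ν : Measure Z} {Υ : ℕ → G → Z → Z → ℝ} {Ω : ℕ → ℕ → Set Z}
  {D C : ℕ → ℝ} {N : ℕ → ℕ} {fbd : ℕ → ℕ → ℝ}

lemma measureReal_compl_le [IsProbabilityMeasure ν] [OpensMeasurableSpace Z]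
    (hadm : IsRelAdmissible act dZ ν Υ Ω D C N fbd) (n m : ℕ) : ν.real (Ω n m)ᶜ ≤ D m := by
  have h := (ENNReal.ofReal_le_iff_le_toReal (measure_ne_top ν _)).1 (hadm.Ω_big n m).le
  rw [probReal_compl_eq_one_sub (hadm.closed_Ω n m).measurableSet, measureReal_def]
  linarith

variable [SFinite ν]

lemma aestronglyMeasurable_Υ (hadm : IsRelAdmissible act dZ ν Υ Ω D C N fbd) (n : ℕ) (b : Z)
    (g : G) : AEStronglyMeasurable (Υ n g b) ν :=
  ((hadm.meas_Υ n g).comp measurable_prodMk_left).aestronglyMeasurable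

lemma integrable_Υ (hadm : IsRelAdmissible act dZ ν Υ Ω D C N fbd) (n : ℕ) (b : Z) (g : G) :
    Integrable (Υ n g b) ν :=
  integrable_of_tsum_lintegral_eq_one (hadm.aestronglyMeasurable_Υ n b)
    (fun g => ae_of_all _ (hadm.nonneg_Υ n g b)) (hadm.normalized n b) g

lemma hasSum_integral_Υ (hadm : IsRelAdmissible act dZ ν Υ Ω D C N fbd) (n : ℕ) (b : Z) :
    HasSum (fun g => ∫ b', Υ n g b b' ∂ν) 1 :=
  hasSum_integral_of_tsum_lintegral_eq_one (hadm.aestronglyMeasurable_Υ n b)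
    (fun g => ae_of_all _ (hadm.nonneg_Υ n g b)) (hadm.normalized n b)

lemma abs_Wop_sub_le {X : Type*} [PseudoMetricSpace X] [MeasurableSpace X]
    [OpensMeasurableSpace X]
    {act : G → X → X} {ν : Measure X} [SFinite ν] {Υ : ℕ → G → X → X → ℝ}
    {Ω : ℕ → ℕ → Set X} {fbd : ℕ → ℕ → ℝ}
    (hadm : IsRelAdmissible act (fun a b : X => dist a b) ν Υ Ω D C N fbd) {n m : ℕ}
    (f : X × ℝ →ᵇ ℝ) {b : X} (hb : b ∈ Ω n m) (t : ℝ) :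
    |Wop ν Υ Ω n m (Function.curry ⇑f) b t - f (b, t)| ≤ horizontalVariation f (fbd m n) := by
  rw [Wop_of_mem hb]
  refine abs_tsum_integral_mul_sub_le (hadm.integrable_Υ n b) (hadm.nonneg_Υ n · b)
    (hadm.hasSum_integral_Υ n b)
    (f.continuous.comp (Continuous.prodMk_left t)).aestronglyMeasurable fun g b' hpos => ?_
  rw [abs_sub_comm]
  exact abs_sub_le_horizontalVariation f t (hadm.close n m g b b' hb hpos).1

end IsRelAdmissible

theorem stmt19_general {G X : Type*} [Group G]
    [MetricSpace X] [MeasurableSpace X] [BorelSpace X]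
    (act : G → X → X)
    (ν : Measure X) [IsProbabilityMeasure ν]
    (Υ : ℕ → G → X → X → ℝ) (Ω : ℕ → ℕ → Set X)
    (D C : ℕ → ℝ) (N : ℕ → ℕ) (fbd : ℕ → ℕ → ℝ)
    (hadm : IsRelAdmissible act (fun a b : X => dist a b) ν Υ Ω D C N fbd) :
    ∀ n m : ℕ, ∀ f : BoundedContinuousFunction (X × ℝ) ℝ,
      (∀ b : X, ∀ t : ℝ, b ∉ Ω n m → Wop ν Υ Ω n m (Function.curry ⇑f) b t = 0) ∧
      (∀ b ∈ Ω n m, ∀ t : ℝ,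
        |Wop ν Υ Ω n m (Function.curry ⇑f) b t - f (b, t)|
          ≤ sSup {v : ℝ | ∃ (x y : X) (s : ℝ), dist x y < fbd m n ∧ v = |f (x, s) - f (y, s)|}) ∧
      ∫ p, |Wop ν Υ Ω n m (Function.curry ⇑f) p.1 p.2 - f p| ∂(ν.prod theta)
        ≤ sSup {v : ℝ | ∃ (x y : X) (s : ℝ), dist x y < fbd m n ∧ v = |f (x, s) - f (y, s)|}
          + D m * ‖f‖ := by
  intro n m f
  have := isProbabilityMeasure_theta
  have hΩ_fst : (ν.prod theta).real (Prod.fst ⁻¹' Ω n m)ᶜ = ν.real (Ω n m)ᶜ := by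
    rw [← preimage_compl, ← prod_univ, measureReal_prod_prod, probReal_univ, mul_one]
  refine ⟨fun b t hb => Wop_of_notMem hb t, fun b hb t => hadm.abs_Wop_sub_le f hb t, ?_⟩
  calc _ ≤ horizontalVariation f (fbd m n) + (ν.prod theta).real (Prod.fst ⁻¹' Ω n m)ᶜ * ‖f‖ :=
        integral_le_add_measureReal_compl_mul
          ((hadm.closed_Ω n m).measurableSet.preimage measurable_fst) (fun _ => abs_nonneg _)
          (horizontalVariation_nonneg _ _) (fun p hp => hadm.abs_Wop_sub_le f hp p.2) fun p hp => by
            simpa [Wop_of_notMem (f := Function.curry ⇑f) hp] using f.norm_coe_le_norm p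
    _ ≤ _ := by
        rw [hΩ_fst]
        exact add_le_add le_rfl
          (mul_le_mul_of_nonneg_right (hadm.measureReal_compl_le n m) (norm_nonneg f))

theorem stmt19 {G X : Type*} [Group G] [Countable G]
    [MetricSpace X] [CompactSpace X] [MeasurableSpace X] [BorelSpace X]
    (act : G → X → X) (hact_one : act 1 = id)
    (hact_mul : ∀ g h : G, act (g * h) = act g ∘ act h)
    (hact_meas : ∀ g : G, Measurable (act g))
    (ν : Measure X) [IsProbabilityMeasure ν]
    (hqi : ∀ g : G, ν.map (act g) ≪ ν ∧ ν ≪ ν.map (act g))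
    (Υ : ℕ → G → X → X → ℝ) (Ω : ℕ → ℕ → Set X)
    (D C : ℕ → ℝ) (N : ℕ → ℕ) (fbd : ℕ → ℕ → ℝ)
    (hadm : IsRelAdmissible act (fun a b : X => dist a b) ν Υ Ω D C N fbd) :
    ∀ n m : ℕ, ∀ f : BoundedContinuousFunction (X × ℝ) ℝ,
      (∀ b : X, ∀ t : ℝ, b ∉ Ω n m → Wop ν Υ Ω n m (Function.curry ⇑f) b t = 0) ∧
      (∀ b ∈ Ω n m, ∀ t : ℝ,
        |Wop ν Υ Ω n m (Function.curry ⇑f) b t - f (b, t)|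
          ≤ sSup {v : ℝ | ∃ (x y : X) (s : ℝ), dist x y < fbd m n ∧ v = |f (x, s) - f (y, s)|}) ∧
      ∫ p, |Wop ν Υ Ω n m (Function.curry ⇑f) p.1 p.2 - f p| ∂(ν.prod theta)
        ≤ sSup {v : ℝ | ∃ (x y : X) (s : ℝ), dist x y < fbd m n ∧ v = |f (x, s) - f (y, s)|}
          + D m * ‖f‖ :=
  stmt19_general act ν Υ Ω D C N fbd hadm
end StableRatio
end
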